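/- arXiv:0804.1258 — 2 statements merged into one kernel-verified Lean document; each statement's English description precedes it below -/
import Mathlib

section
/- The center of the oriented tree diagram Lie algebra L_0(𝒯^d) is the span of {∂_{x_i} : ι_i ∈ Γ}, where Γ is the set of tip nodes (nodes with no outgoing edge). In particular, dim Z(L_0(𝒯^d)) = |Γ|. -/
noncomputable section
namespace CE

variable (L : Type*) [LieRing L] [LieAlgebra ℂ L]

/-- Raw `k`-cochains: arbitrary functions `L^k → ℂ`. -/
abbrev Raw (k : ℕ) := (Fin k → L) → ℂ

variable {L}

/-- The submodule of alternating multilinear functions `L^k → ℂ`. -/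
def AltML (k : ℕ) : Submodule ℂ (Raw L k) where
  carrier := {f | (∀ (x : Fin k → L) (i : Fin k) (a b : L),
        f (Function.update x i (a + b)) =
          f (Function.update x i a) + f (Function.update x i b)) ∧
      (∀ (x : Fin k → L) (i : Fin k) (c : ℂ) (a : L),
        f (Function.update x i (c • a)) = c * f (Function.update x i a)) ∧
      (∀ (x : Fin k → L) (i j : Fin k), i ≠ j → x i = x j → f x = 0)}
  add_mem' := by
    rintro f g ⟨hf1, hf2, hf3⟩ ⟨hg1, hg2, hg3⟩
    refine ⟨fun x i a b => ?_, fun x i c a => ?_, fun x i j hij hx => ?_⟩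
    · simp only [Pi.add_apply, hf1, hg1]; ring
    · simp only [Pi.add_apply, hf2, hg2]; ring
    · simp only [Pi.add_apply, hf3 x i j hij hx, hg3 x i j hij hx, add_zero]
  zero_mem' := by
    refine ⟨fun x i a b => ?_, fun x i c a => ?_, fun x i j hij hx => ?_⟩ <;> simp
  smul_mem' := by
    rintro c f ⟨hf1, hf2, hf3⟩
    refine ⟨fun x i a b => ?_, fun x i c' a => ?_, fun x i j hij hx => ?_⟩
    · simp only [Pi.smul_apply, smul_eq_mul, hf1]; ring
    · simp only [Pi.smul_apply, smul_eq_mul, hf2]; ring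
    · simp only [Pi.smul_apply, smul_eq_mul, hf3 x i j hij hx, mul_zero]

/-- Index helper: the `s`-th remaining index (0-based) after removing positions
`i < j` from `{0,…,k}`. -/
def idx (i j s : ℕ) : ℕ :=
  let a := if s < i then s else s + 1
  if a < j then a else a + 1

/-- The Chevalley–Eilenberg coboundary (trivial coefficients):
`(d f)(x₀,…,x_k) = ∑_{i<j} (-1)^{i+j} f(⁅x_i,x_j⁆, x₀,…,x̂_i,…,x̂_j,…,x_k)`. -/
def d (k : ℕ) : Raw L k →ₗ[ℂ] Raw L (k+1) where
  toFun f := fun x =>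
    ∑ i : Fin (k+1), ∑ j : Fin (k+1),
      if (i : ℕ) < (j : ℕ) then
        (-1 : ℂ) ^ ((i : ℕ) + (j : ℕ)) *
          f (fun r => if (r : ℕ) = 0 then ⁅x i, x j⁆
              else x ⟨idx i j ((r : ℕ) - 1) % (k+1), Nat.mod_lt _ k.succ_pos⟩)
      else 0
  map_add' f g := by
    funext x
    simp only [Pi.add_apply, ← Finset.sum_add_distrib]
    refine Finset.sum_congr rfl fun i _ => Finset.sum_congr rfl fun j _ => ?_
    split_ifs <;> ring
  map_smul' c f := by
    funext x
    simp only [Pi.smul_apply, smul_eq_mul, RingHom.id_apply, Finset.mul_sum]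
    refine Finset.sum_congr rfl fun i _ => Finset.sum_congr rfl fun j _ => ?_
    split_ifs <;> ring

variable (L)

/-- `k`-cocycles: alternating multilinear cochains killed by the coboundary. -/
def cocycles (k : ℕ) : Submodule ℂ (Raw L k) := AltML k ⊓ LinearMap.ker (d k)

/-- `k+1`-coboundaries: images of alternating multilinear `k`-cochains. -/
def coboundaries (k : ℕ) : Submodule ℂ (Raw L (k+1)) := (AltML k).map (d k)

/-- The `k`-th Chevalley–Eilenberg cohomology of `L` with trivial coefficients. -/
def H : ℕ → Type _
  | 0 => cocycles L 0
  | (k+1) => ↥(cocycles L (k+1)) ⧸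
      (Submodule.comap (cocycles L (k+1)).subtype (coboundaries L k))

instance : ∀ k, AddCommGroup (H L k)
  | 0 => by unfold H; infer_instance
  | (k+1) => by unfold H; infer_instance

instance : ∀ k, Module ℂ (H L k)
  | 0 => by unfold H; infer_instance
  | (k+1) => by unfold H; infer_instance

/-- The `k`-th Betti number of `L`. -/
def betti (k : ℕ) : ℕ := Module.finrank ℂ (H L k)

end CE

noncomputable section

attribute [local instance] LieRing.ofAssociativeRing

/-- An oriented tree diagram `𝒯^d = (𝒩, ℰ, d)`: nodes `{0, …, n−1}`, oriented edges going
from smaller to larger indices, positive integer weights on edges, whose underlying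
undirected graph is a tree. -/
structure OrientedTreeDiagram where
  /-- the number of nodes -/
  n : ℕ
  npos : 0 < n
  /-- the oriented edge relation -/
  edge : Fin n → Fin n → Prop
  edge_lt : ∀ i j, edge i j → i < j
  /-- the weight map `d : ℰ → ℤ₊` -/
  weight : Fin n → Fin n → ℕ
  weight_pos : ∀ i j, edge i j → 0 < weight i j
  /-- the underlying undirected graph is a tree (connected and acyclic) -/
  isTree : (SimpleGraph.fromRel edge).IsTree

namespace OrientedTreeDiagram

variable (T : OrientedTreeDiagram)

/-- The polynomial ring `ℂ[x_1, …, x_n]` (variables indexed by the nodes). -/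
abbrev Poly := MvPolynomial (Fin T.n) ℂ

/-- The operator `∂_{x_i}`. -/
def pd (i : Fin T.n) : Module.End ℂ T.Poly :=
  (MvPolynomial.pderiv i : Derivation ℂ T.Poly T.Poly).toLinearMap

/-- The operator `x_i^k ∂_{x_j}`. -/
def monOp (i : Fin T.n) (k : ℕ) (j : Fin T.n) : Module.End ℂ T.Poly :=
  (LinearMap.mulLeft ℂ ((MvPolynomial.X i : T.Poly) ^ k)).comp (T.pd j)

/-- A node is a root node if it has no incoming edge. -/
def IsRoot (i : Fin T.n) : Prop := ∀ j, ¬ T.edge j i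

/-- A node is a tip node if it has no outgoing edge. -/
def IsTip (i : Fin T.n) : Prop := ∀ j, ¬ T.edge i j

/-- The generators `{∂_{x_i} : ι_i ∈ Λ} ∪ {x_j^{d(ι_j,ι_k)} ∂_{x_k} : (ι_j,ι_k) ∈ ℰ}`. -/
def generators : Set (Module.End ℂ T.Poly) :=
  {f | ∃ i, T.IsRoot i ∧ f = T.pd i} ∪
    {f | ∃ i j, T.edge i j ∧ f = T.monOp i (T.weight i j) j}

/-- The oriented tree diagram Lie algebra `L₀(𝒯^d)`: the Lie subalgebra of differential
operators generated by the generators above. -/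
def L0 : LieSubalgebra ℂ (Module.End ℂ T.Poly) :=
  LieSubalgebra.lieSpan ℂ _ T.generators

end OrientedTreeDiagram

/-!
Every element of `L₀(𝒯^d)` is a derivation of `ℂ[x₁, …, xₙ]`, and `L₀(𝒯^d)` contains every
`∂ᵢ`: going down an edge `j → i`, bracketing `x_j^d ∂_i` with `∂_j` `d` times leaves a nonzero
multiple of `∂_i`. A derivation commuting with all `∂ᵢ` sends each `x_k` to a constant `c_k`,
so it equals `∑ c_k ∂_k`; if it also commutes with `x_k^d ∂_l` for an edge `k → l`, then
`0 = [D, x_k^d ∂_l] x_l = D(x_k^d) = d c_k x_k^(d-1)`, so `c_k = 0`. Conversely, for a tip `i`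
no generator has a coefficient involving `x_i`, so `∂ᵢ` commutes with all of them. The dimension
count follows from the linear independence of the `∂ᵢ`.
-/

open MvPolynomial

namespace Derivation

variable {R A : Type*} [CommRing R] [CommRing A] [Algebra R A]

theorem commutator_smul (D₁ D₂ : Derivation R A A) (a : A) :
    ⁅D₁, a • D₂⁆ = D₁ a • D₂ + a • ⁅D₁, D₂⁆ := by
  ext b
  simp only [commutator_apply, add_apply, smul_apply, leibniz, smul_eq_mul]
  ring

theorem sum_apply {M ι : Type*} [AddCommGroup M] [Module A M] [Module R M] [IsScalarTower R A M]
    (s : Finset ι) (D : ι → Derivation R A M) (a : A) :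
    (∑ i ∈ s, D i) a = ∑ i ∈ s, D i a := by
  rw [← coeFnAddMonoidHom_apply, map_sum, Finset.sum_apply]
  rfl

variable (R A) in
def toEndLieHom : Derivation R A A →ₗ⁅R⁆ Module.End R A where
  toFun D := D
  map_add' _ _ := rfl
  map_smul' _ _ := rfl
  map_lie' := rfl

theorem toEndLieHom_injective : Function.Injective (toEndLieHom R A) :=
  fun _ _ h => coe_injective congr(⇑$h)

end Derivation

namespace MvPolynomial

variable {σ R : Type*} [CommRing R]

theorem eq_C_coeff_zero_of_forall_pderiv_eq_zero [IsAddTorsionFree R] {p : MvPolynomial σ R}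
    (h : ∀ i, pderiv i p = 0) : p = C (coeff 0 p) :=
  coe_injective σ R <| MvPowerSeries.pderiv.ext (fun i => by simp [MvPowerSeries.pderiv_coe, h])
    (by rw [← MvPowerSeries.coeff_zero_eq_constantCoeff_apply, coeff_coe]; simp)

theorem lie_pderiv_pderiv (i j : σ) :
    ⁅pderiv (R := R) i, pderiv (R := R) j⁆ = 0 := by
  classical
  refine derivation_ext fun k => ?_
  simp [Derivation.commutator_apply, pderiv_X, Pi.single_apply, apply_ite (pderiv _)]

variable {D : Derivation R (MvPolynomial σ R) (MvPolynomial σ R)}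

theorem derivation_X_eq_C_of_lie_pderiv_eq_zero [IsAddTorsionFree R]
    (hD : ∀ i : σ, ⁅D, pderiv (R := R) i⁆ = 0) (k : σ) : D (X k) = C (coeff 0 (D (X k))) := by
  classical
  refine eq_C_coeff_zero_of_forall_pderiv_eq_zero fun i => ?_
  have h := congr($(hD i) (X k))
  simpa only [Derivation.commutator_apply, pderiv_X, Pi.single_apply, apply_ite D,
    D.map_one_eq_zero, map_zero, ite_self, zero_sub, Derivation.zero_apply, neg_eq_zero] using h

theorem eq_sum_smul_pderiv_of_lie_pderiv_eq_zero [Fintype σ] [IsAddTorsionFree R]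
    (hD : ∀ i : σ, ⁅D, pderiv (R := R) i⁆ = 0) : D = ∑ k, coeff 0 (D (X k)) • pderiv k := by
  classical
  refine derivation_ext fun k => ?_
  rw [derivation_X_eq_C_of_lie_pderiv_eq_zero hD k]
  simp [Derivation.sum_apply, pderiv_X, Pi.single_apply, smul_eq_C_mul]

theorem coeff_zero_derivation_X_eq_zero [IsDomain R] [CharZero R]
    (hD : ∀ i : σ, ⁅D, pderiv (R := R) i⁆ = 0) {k l : σ} {w : ℕ} (hw : w ≠ 0)
    (hkl : ⁅D, (X k ^ w : MvPolynomial σ R) • pderiv (R := R) l⁆ = 0) :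
    coeff 0 (D (X k)) = 0 := by
  have hDX : D (X k ^ w) = 0 := by
    simpa [Derivation.commutator_smul, hD l] using congr($hkl (X l))
  rw [D.leibniz_pow, derivation_X_eq_C_of_lie_pderiv_eq_zero hD k] at hDX
  simpa [hw, X_ne_zero] using hDX

theorem linearIndependent_pderiv [Nontrivial R] :
    LinearIndependent R fun i : σ =>
      (pderiv i : Derivation R (MvPolynomial σ R) (MvPolynomial σ R)).toLinearMap := by
  classical
  refine linearIndependent_iff'.2 fun s g hg i hi => ?_
  simpa [pderiv_X, Pi.single_apply, hi, smul_eq_C_mul] using congr($hg (X i))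

end MvPolynomial

theorem LieSubalgebra.lie_eq_zero_of_mem_lieSpan {R L : Type*} [CommRing R] [LieRing L]
    [LieAlgebra R L] {s : Set L} {x y : L} (h : ∀ z ∈ s, ⁅x, z⁆ = 0)
    (hy : y ∈ lieSpan R L s) : ⁅x, y⁆ = 0 := by
  induction hy using lieSpan_induction with
  | mem z hz => exact h z hz
  | zero => exact lie_zero x
  | add a b _ _ ha hb => rw [lie_add, ha, hb, add_zero]
  | smul c a _ ha => rw [lie_smul, ha, smul_zero]
  | lie a b _ _ ha hb => rw [leibniz_lie, ha, hb, zero_lie, lie_zero, add_zero]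

theorem LieSubalgebra.mem_center_iff {R L : Type*} [CommRing R] [LieRing L] [LieAlgebra R L]
    {K : LieSubalgebra R L} (z : K) :
    z ∈ LieAlgebra.center R K ↔ ∀ x ∈ K, ⁅x, (z : L)⁆ = 0 := by
  simp [LieModule.mem_maxTrivSubmodule, Subtype.ext_iff]

namespace OrientedTreeDiagram

variable (T : OrientedTreeDiagram)

local notation "φ" => Derivation.toEndLieHom ℂ T.Poly

theorem pd_eq_toEndLieHom (i : Fin T.n) : T.pd i = φ (pderiv i) := rfl

theorem monOp_eq_toEndLieHom (i : Fin T.n) (k : ℕ) (j : Fin T.n) :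
    T.monOp i k j = φ (((X i : T.Poly) ^ k) • pderiv j) := rfl

theorem L0_le_range_toEndLieHom : T.L0 ≤ (Derivation.toEndLieHom ℂ T.Poly).range := by
  rw [L0, LieSubalgebra.lieSpan_le]
  rintro f (⟨i, -, rfl⟩ | ⟨i, j, -, rfl⟩)
  · exact ⟨_, (T.pd_eq_toEndLieHom i).symm⟩
  · exact ⟨_, (T.monOp_eq_toEndLieHom i _ j).symm⟩

theorem lie_pd_monOp (j i : Fin T.n) (k : ℕ) (l : Fin T.n) :
    ⁅T.pd j, T.monOp i k l⁆ = φ (pderiv j ((X i : T.Poly) ^ k) • pderiv l) := by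
  rw [pd_eq_toEndLieHom, monOp_eq_toEndLieHom, ← LieHom.map_lie, Derivation.commutator_smul,
    lie_pderiv_pderiv, smul_zero, add_zero]

theorem lie_pd_monOp_self (j i : Fin T.n) (w : ℕ) :
    ⁅T.pd j, T.monOp j (w + 1) i⁆ = ((w + 1 : ℕ) : ℂ) • T.monOp j w i := by
  rw [lie_pd_monOp, pderiv_pow, pderiv_X_self, mul_one, Nat.add_sub_cancel,
    monOp_eq_toEndLieHom, ← map_smul, mul_smul, Nat.cast_smul_eq_nsmul, Nat.cast_smul_eq_nsmul]

theorem pd_mem_of_monOp_mem {L : LieSubalgebra ℂ (Module.End ℂ T.Poly)} {j i : Fin T.n}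
    (hj : T.pd j ∈ L) : ∀ {w : ℕ}, T.monOp j w i ∈ L → T.pd i ∈ L
  | 0, h => by rwa [monOp_eq_toEndLieHom, pow_zero, one_smul, ← pd_eq_toEndLieHom] at h
  | w + 1, h => by
    have h' := L.lie_mem hj h
    rw [lie_pd_monOp_self] at h'
    exact pd_mem_of_monOp_mem hj
      ((L.toSubmodule.smul_mem_iff (Nat.cast_ne_zero.2 w.succ_ne_zero)).1 h')

theorem pd_mem_L0 (i : Fin T.n) : T.pd i ∈ T.L0 := by
  induction i using WellFoundedLT.induction with
  | ind i ih =>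
    by_cases hi : T.IsRoot i
    · exact LieSubalgebra.subset_lieSpan (Or.inl ⟨i, hi, rfl⟩)
    · obtain ⟨j, hji⟩ : ∃ j, T.edge j i := by simpa [IsRoot] using hi
      exact T.pd_mem_of_monOp_mem (ih j (T.edge_lt j i hji))
        (LieSubalgebra.subset_lieSpan (Or.inr ⟨j, i, hji, rfl⟩))

theorem lie_pd_eq_zero_of_isTip {i : Fin T.n} (hi : T.IsTip i) {x : Module.End ℂ T.Poly}
    (hx : x ∈ T.L0) : ⁅T.pd i, x⁆ = 0 := by
  refine LieSubalgebra.lie_eq_zero_of_mem_lieSpan ?_ hx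
  rintro f (⟨j, -, rfl⟩ | ⟨j, k, hjk, rfl⟩)
  · rw [pd_eq_toEndLieHom, pd_eq_toEndLieHom, ← LieHom.map_lie, lie_pderiv_pderiv, map_zero]
  · have hji : j ≠ i := fun h => hi k (h ▸ hjk)
    rw [lie_pd_monOp, pderiv_pow, pderiv_X_of_ne hji, mul_zero, zero_smul, map_zero]

theorem linearIndependent_pd : LinearIndependent ℂ T.pd := linearIndependent_pderiv

theorem mem_center_L0_iff (z : T.L0) :
    z ∈ LieAlgebra.center ℂ T.L0 ↔
      (z : Module.End ℂ T.Poly) ∈ Submodule.span ℂ {f | ∃ i, T.IsTip i ∧ f = T.pd i} := by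
  rw [LieSubalgebra.mem_center_iff]
  constructor
  · intro hz
    obtain ⟨D, hD⟩ := (LieHom.mem_range _ _).1 (T.L0_le_range_toEndLieHom z.2)
    have hcomm (E : Derivation ℂ T.Poly T.Poly) (hE : φ E ∈ T.L0) : ⁅D, E⁆ = 0 :=
      Derivation.toEndLieHom_injective <| by
        rw [LieHom.map_lie, hD, ← lie_skew, hz _ hE, neg_zero, map_zero]
    have hpd (i : Fin T.n) : ⁅D, pderiv i⁆ = 0 := hcomm _ (T.pd_mem_L0 i)
    rw [← hD, eq_sum_smul_pderiv_of_lie_pderiv_eq_zero hpd, map_sum]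
    refine Submodule.sum_mem _ fun k _ => ?_
    by_cases hk : T.IsTip k
    · exact Submodule.smul_mem _ _ (Submodule.subset_span ⟨k, hk, rfl⟩)
    · obtain ⟨l, hkl⟩ : ∃ l, T.edge k l := by simpa [IsTip] using hk
      have hD_monOp := hcomm ((X k : T.Poly) ^ T.weight k l • pderiv l)
        (LieSubalgebra.subset_lieSpan (Or.inr ⟨k, l, hkl, rfl⟩))
      rw [coeff_zero_derivation_X_eq_zero hpd (T.weight_pos k l hkl).ne' hD_monOp, zero_smul,
        map_zero]
      exact zero_mem _
  · intro hz x hx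
    suffices Submodule.span ℂ {f | ∃ i, T.IsTip i ∧ f = T.pd i} ≤
        LinearMap.ker (LieAlgebra.ad ℂ _ x) from this hz
    rw [Submodule.span_le]
    rintro _ ⟨i, hi, rfl⟩
    rw [SetLike.mem_coe, LinearMap.mem_ker, LieAlgebra.ad_apply, ← lie_skew,
      T.lie_pd_eq_zero_of_isTip hi hx, neg_zero]

theorem finrank_center_L0 :
    Module.finrank ℂ (LieAlgebra.center ℂ T.L0) = Nat.card {i : Fin T.n // T.IsTip i} := by
  classical
  have hrange : Set.range (fun i : {i // T.IsTip i} => T.pd i) =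
      {f | ∃ i, T.IsTip i ∧ f = T.pd i} := by
    ext
    simp [eq_comm]
  have hmap : (LieAlgebra.center ℂ T.L0).toSubmodule.map T.L0.toSubmodule.subtype =
      Submodule.span ℂ {f | ∃ i, T.IsTip i ∧ f = T.pd i} := by
    ext f
    constructor
    · rintro ⟨z, hz, rfl⟩
      exact (T.mem_center_L0_iff z).1 hz
    · intro hf
      have hfL0 : f ∈ T.L0 := by
        refine Submodule.span_le.2 ?_ hf
        rintro _ ⟨i, -, rfl⟩
        exact T.pd_mem_L0 i
      exact ⟨⟨f, hfL0⟩, (T.mem_center_L0_iff _).2 hf, rfl⟩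
  calc Module.finrank ℂ (LieAlgebra.center ℂ T.L0)
      = Module.finrank ℂ ((LieAlgebra.center ℂ T.L0).toSubmodule.map
          T.L0.toSubmodule.subtype) :=
        (Submodule.equivMapOfInjective _ Subtype.val_injective _).finrank_eq
    _ = Nat.card {i : Fin T.n // T.IsTip i} := by
        rw [hmap, ← hrange, finrank_span_eq_card (b := fun i : {i // T.IsTip i} => T.pd i)
          (T.linearIndependent_pd.comp _ Subtype.val_injective), Nat.card_eq_fintype_card]

end OrientedTreeDiagram

open OrientedTreeDiagram in
/-- The center of the oriented tree diagram Lie algebra `L₀(𝒯^d)` is the span of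
`{∂_{x_i} : ι_i ∈ Γ}`, where `Γ` is the set of tip nodes; in particular its dimension
is `|Γ|`. -/
theorem center_treeDiagram (T : OrientedTreeDiagram) :
    (∀ z : ↥T.L0, z ∈ LieAlgebra.center ℂ ↥T.L0 ↔
        (z : Module.End ℂ T.Poly) ∈
          Submodule.span ℂ {f | ∃ i, T.IsTip i ∧ f = T.pd i}) ∧
      Module.finrank ℂ ↥(LieAlgebra.center ℂ ↥T.L0) =
        Nat.card {i : Fin T.n // T.IsTip i} :=
  ⟨T.mem_center_L0_iff, T.finrank_center_L0⟩
end
end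
end

section
/- Let 𝔤 be a finite-dimensional Lie algebra and g_1,…,g_t ∈ 𝔤 pairwise commuting elements such that 𝔤 has a basis of simultaneous eigenvectors of all ad g_i. Then the inclusion of the weight-zero subcomplex Λ_{(0,…,0)}𝔤 into Λ𝔤 induces an isomorphism on Lie algebra cohomology with trivial coefficients. -/
/-!
Fix a basis `b` of simultaneous eigenvectors of the `ad gᵢ`, with `⁅gᵢ, b v⁆ = wt v i • b v`.
Expanding a multilinear cochain in the dual basis splits it into weight components `P_μ f`,
keeping the monomials on basis tuples of total weight `μ`. Each `P_μ` preserves alternating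
cochains and commutes with `d`, since the bracket of eigenvectors of weights `λ`, `λ'` has
weight `λ + λ'`. On `P_μ f` the Lie derivative `θ(gᵢ)` acts by `-μᵢ`, so Cartan's formula
`θ(y) = d ι_y + ι_y d` shows that a cocycle of weight `μ ≠ 0` is exact. Hence every cocycle
`f` is cohomologous to `P_0 f`, and a weight-zero coboundary `d u` is also `d (P_0 u)`.
-/

noncomputable section
noncomputable section

namespace CE

variable {L : Type*} [LieRing L] [LieAlgebra ℂ L]

/-- The weight-zero subcomplex determined by commuting elements `g₁, …, g_t`: a cochain
has weight zero when it vanishes on every tuple of simultaneous eigenvectors of the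
`ad gᵢ` whose weights do not sum to zero. -/
def weightZero {t : ℕ} (g : Fin t → L) (k : ℕ) : Submodule ℂ (Raw L k) where
  carrier := {f | ∀ (lam : Fin k → Fin t → ℂ) (x : Fin k → L),
    (∀ r i, ⁅g i, x r⁆ = lam r i • x r) → (∑ r, lam r) ≠ 0 → f x = 0}
  add_mem' := by
    intro f f' hf hf' lam x hx hlam
    simp only [Pi.add_apply, hf lam x hx hlam, hf' lam x hx hlam, add_zero]
  zero_mem' := by intro lam x hx hlam; rfl
  smul_mem' := by
    intro c f hf lam x hx hlam
    simp only [Pi.smul_apply, smul_eq_mul, hf lam x hx hlam, mul_zero]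

end CE


open Function

namespace CE

variable {L : Type*} [LieRing L]

section Coboundary

variable {m : ℕ} {i : Fin (m+2)} {j : Fin (m+1)}

-- The arguments of the term of `d f x` indexed by `i < j + 1`, hence the hypotheses `i ≤ j` below.
def dArgs (i : Fin (m+2)) (j : Fin (m+1)) (x : Fin (m+2) → L) : Fin (m+1) → L :=
  Fin.cons ⁅x i, x j.succ⁆ (x ∘ i.succAbove ∘ j.succAbove)

lemma idx_eq_succAbove (hij : (i : ℕ) ≤ j) (s : Fin m) :
    idx i (j + 1) s = i.succAbove (j.succAbove s) := by
  simp only [idx, Fin.succAbove, Fin.lt_def, Fin.val_castSucc]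
  split_ifs <;> simp_all <;> omega

lemma d_succ_apply (f : Raw L (m+1)) (x : Fin (m+2) → L) :
    d (m+1) f x = ∑ i : Fin (m+2), ∑ j : Fin (m+1),
      if (i : ℕ) ≤ j then (-1 : ℂ) ^ ((i : ℕ) + j + 1) * f (dArgs i j x) else 0 := by
  change ∑ i : Fin (m+2), ∑ j : Fin (m+2), _ = _
  refine Finset.sum_congr rfl fun i _ => ?_
  simp only [Fin.sum_univ_succ (n := m + 1), Fin.val_zero, Nat.not_lt_zero, if_false, zero_add]
  refine Finset.sum_congr rfl fun j _ => ?_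
  simp only [Fin.val_succ, Nat.lt_succ_iff, ← add_assoc]
  refine if_ctx_congr Iff.rfl (fun hij => congrArg _ (congrArg f (funext fun r => ?_))) fun _ => rfl
  cases r using Fin.cases with
  | zero => rfl
  | succ s =>
    have hlt := (i.succAbove (j.succAbove s)).isLt
    simp only [Fin.val_succ, Nat.add_one_ne_zero, if_false, Nat.add_sub_cancel]
    exact congrArg x (Fin.ext (by simp only [idx_eq_succAbove hij, Nat.mod_eq_of_lt hlt]; rfl))

lemma succAbove_eq_succ_of_le (hij : (i : ℕ) ≤ j) : i.succAbove j = j.succ :=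
  Fin.succAbove_of_le_castSucc i j (Fin.le_def.mpr hij)

lemma succ_ne_of_le (hij : (i : ℕ) ≤ j) : j.succ ≠ i :=
  succAbove_eq_succ_of_le hij ▸ Fin.succAbove_ne i j

lemma succAbove_succAbove_ne_succ (hij : (i : ℕ) ≤ j) (u : Fin m) :
    i.succAbove (j.succAbove u) ≠ j.succ := by
  rw [← succAbove_eq_succ_of_le hij]
  exact fun h => Fin.succAbove_ne j u (Fin.succAbove_right_injective h)

lemma eq_or_eq_or_exists_succAbove (hij : (i : ℕ) ≤ j)
    (p : Fin (m+2)) : p = i ∨ p = j.succ ∨ ∃ u, p = i.succAbove (j.succAbove u) := by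
  by_cases hpi : p = i
  · exact Or.inl hpi
  obtain ⟨v, rfl⟩ := Fin.exists_succAbove_eq hpi
  by_cases hvj : v = j
  · subst hvj
    exact Or.inr (Or.inl (succAbove_eq_succ_of_le hij))
  obtain ⟨u, rfl⟩ := Fin.exists_succAbove_eq hvj
  exact Or.inr (Or.inr ⟨u, rfl⟩)

lemma dArgs_update_left (hij : (i : ℕ) ≤ j)
    (x : Fin (m+2) → L) (z : L) :
    dArgs i j (update x i z) = update (dArgs i j x) 0 ⁅z, x j.succ⁆ := by
  rw [dArgs, dArgs, update_self, update_of_ne (succ_ne_of_le hij), Fin.update_cons_zero]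
  exact congrArg _ (update_comp_eq_of_forall_ne x z fun u => Fin.succAbove_ne i _)

lemma dArgs_update_right (hij : (i : ℕ) ≤ j)
    (x : Fin (m+2) → L) (z : L) :
    dArgs i j (update x j.succ z) = update (dArgs i j x) 0 ⁅x i, z⁆ := by
  rw [dArgs, dArgs, update_self, update_of_ne (succ_ne_of_le hij).symm, Fin.update_cons_zero]
  exact congrArg _ (update_comp_eq_of_forall_ne x z (succAbove_succAbove_ne_succ hij))

lemma dArgs_update_succAbove (hij : (i : ℕ) ≤ j)
    (x : Fin (m+2) → L) (u : Fin m) (z : L) :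
    dArgs i j (update x (i.succAbove (j.succAbove u)) z) = update (dArgs i j x) u.succ z := by
  have hi : i.succAbove (j.succAbove u) ≠ i := Fin.succAbove_ne i _
  rw [dArgs, dArgs, update_of_ne hi.symm, update_of_ne (succAbove_succAbove_ne_succ hij u).symm,
    ← Fin.cons_update]
  congr 1
  exact update_comp_eq_of_injective x
    (Fin.succAbove_right_injective.comp Fin.succAbove_right_injective) u z

lemma dArgs_succ_cons (i : Fin (m+2)) (j : Fin (m+1)) (y : L) (x : Fin (m+2) → L) :
    dArgs i.succ j.succ (Fin.cons y x)
      = Fin.cons ⁅x i, x j.succ⁆ (Fin.cons y (x ∘ i.succAbove ∘ j.succAbove)) := by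
  funext r
  cases r using Fin.cases with
  | zero => simp [dArgs]
  | succ s => cases s using Fin.cases <;> simp [dArgs, Fin.succ_succAbove_succ]

lemma d_zero (f : Raw L 0) : d 0 f = 0 := by
  funext x
  simp [d]

end Coboundary

variable [LieAlgebra ℂ L]

section Multilinear

variable {k : ℕ}

def ML (k : ℕ) : Submodule ℂ (Raw L k) where
  carrier := Set.range fun F : MultilinearMap ℂ (fun _ : Fin k => L) ℂ => ⇑F
  add_mem' := by rintro _ _ ⟨F, rfl⟩ ⟨G, rfl⟩; exact ⟨F + G, rfl⟩
  zero_mem' := ⟨0, rfl⟩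
  smul_mem' := by rintro c _ ⟨F, rfl⟩; exact ⟨c • F, rfl⟩

lemma mem_ML_of_update {f : Raw L k}
    (hadd : ∀ (x : Fin k → L) (i : Fin k) (a b : L),
      f (update x i (a + b)) = f (update x i a) + f (update x i b))
    (hsmul : ∀ (x : Fin k → L) (i : Fin k) (c : ℂ) (a : L),
      f (update x i (c • a)) = c * f (update x i a)) : f ∈ ML k :=
  ⟨{ toFun := f
     map_update_add' := fun x i a b => by convert hadd x i a b
     map_update_smul' := fun x i c a => by rw [smul_eq_mul]; convert hsmul x i c a }, rfl⟩

def alternatingMapOf {f : Raw L k} (hf : f ∈ AltML k) : L [⋀^Fin k]→ₗ[ℂ] ℂ where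
  toFun := f
  map_update_add' x i a b := by convert hf.1 x i a b
  map_update_smul' x i c a := by rw [smul_eq_mul]; convert hf.2.1 x i c a
  map_eq_zero_of_eq' x i j hx hij := hf.2.2 x i j hij hx

@[simp] lemma alternatingMapOf_apply {f : Raw L k} (hf : f ∈ AltML k) (x : Fin k → L) :
    alternatingMapOf hf x = f x := rfl

lemma AltML_le_ML : AltML k ≤ (ML k : Submodule ℂ (Raw L k)) :=
  fun _ hf => ⟨(alternatingMapOf hf).toMultilinearMap, rfl⟩

lemma mem_AltML_iff {f : Raw L k} : f ∈ AltML k ↔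
    f ∈ ML k ∧ ∀ (x : Fin k → L) (i j : Fin k), i ≠ j → x i = x j → f x = 0 := by
  refine ⟨fun hf => ⟨AltML_le_ML hf, hf.2.2⟩, ?_⟩
  rintro ⟨⟨F, rfl⟩, halt⟩
  exact ⟨fun x i a b => by convert F.map_update_add x i a b,
    fun x i c a => by rw [← smul_eq_mul]; convert F.map_update_smul x i c a, halt⟩

lemma ML.ext_basis {ι : Type*} (b : Module.Basis ι ℂ L) {f f' : Raw L k} (hf : f ∈ ML k)
    (hf' : f' ∈ ML k) (h : ∀ w : Fin k → ι, f (fun r => b (w r)) = f' (fun r => b (w r))) :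
    f = f' := by
  obtain ⟨F, rfl⟩ := hf
  obtain ⟨F', rfl⟩ := hf'
  exact congrArg _ (Module.Basis.ext_multilinear (fun _ => b) h)

lemma ML.apply_cons_eq_sum {ι : Type*} [Fintype ι] (b : Module.Basis ι ℂ L) {f : Raw L (k+1)}
    (hf : f ∈ ML (k+1)) (z : L) (t : Fin k → L) :
    f (Fin.cons z t) = ∑ e, b.repr z e * f (Fin.cons (b e) t) := by
  obtain ⟨F, rfl⟩ := hf
  change F.curryLeft z t = ∑ e, b.repr z e * F.curryLeft (b e) t
  conv_lhs => rw [← b.sum_repr z]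
  simp only [map_sum, map_smul, sum_apply, smul_apply, smul_eq_mul]

lemma comp_dArgs_mem_ML {m : ℕ} {f : Raw L (m+1)} (hf : f ∈ ML (m+1)) {i : Fin (m+2)}
    {j : Fin (m+1)} (hij : (i : ℕ) ≤ j) : (fun x => f (dArgs i j x)) ∈ ML (m+2) := by
  obtain ⟨F, rfl⟩ := hf
  apply mem_ML_of_update
  · intro x p a a'
    rcases eq_or_eq_or_exists_succAbove hij p with rfl | rfl | ⟨u, rfl⟩
    · simp only [dArgs_update_left hij, add_lie, F.map_update_add]
    · simp only [dArgs_update_right hij, lie_add, F.map_update_add]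
    · simp only [dArgs_update_succAbove hij, F.map_update_add]
  · intro x p c a
    rcases eq_or_eq_or_exists_succAbove hij p with rfl | rfl | ⟨u, rfl⟩
    · simp only [dArgs_update_left hij, smul_lie, F.map_update_smul, smul_eq_mul]
    · simp only [dArgs_update_right hij, lie_smul, F.map_update_smul, smul_eq_mul]
    · simp only [dArgs_update_succAbove hij, F.map_update_smul, smul_eq_mul]

lemma d_mem_ML {f : Raw L k} (hf : f ∈ ML k) : d k f ∈ ML (k+1) := by
  cases k with
  | zero => rw [d_zero]; exact zero_mem _
  | succ m =>
    have hd : d (m+1) f = ∑ i : Fin (m+2), ∑ j : Fin (m+1),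
        if (i : ℕ) ≤ j then (-1 : ℂ) ^ ((i : ℕ) + j + 1) • fun x => f (dArgs i j x)
        else 0 := by
      funext x
      simp only [d_succ_apply, Finset.sum_apply, apply_ite (fun F : Raw L (m+2) => F x),
        Pi.smul_apply, smul_eq_mul, Pi.zero_apply]
    rw [hd]
    refine sum_mem fun i _ => sum_mem fun j _ => ?_
    split_ifs with hij
    exacts [Submodule.smul_mem _ _ (comp_dArgs_mem_ML hf hij), zero_mem _]

end Multilinear

section Cartan

variable {k : ℕ}

def iota (y : L) (f : Raw L (k+1)) : Raw L k := fun x => f (Fin.cons y x)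

def lieDeriv (y : L) (f : Raw L k) : Raw L k := fun x => -∑ r, f (update x r ⁅y, x r⁆)

lemma iota_mem_AltML {f : Raw L (k+1)} (hf : f ∈ AltML (k+1)) (y : L) : iota y f ∈ AltML k := by
  refine mem_AltML_iff.mpr ⟨⟨(alternatingMapOf hf).curryLeft y, rfl⟩, fun x i j hij hx => ?_⟩
  exact hf.2.2 (Fin.cons y x) i.succ j.succ (Fin.succ_injective _ |>.ne hij) hx

lemma apply_cons_eq_update {f : Raw L (k+1)} (hf : f ∈ AltML (k+1)) (x : Fin (k+1) → L)
    (r : Fin (k+1)) (z : L) :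
    f (Fin.cons z (x ∘ r.succAbove)) = (-1) ^ (r : ℕ) * f (update x r z) := by
  have h := (alternatingMapOf hf).neg_one_pow_smul_map_insertNth r z (r.removeNth x)
  rw [Fin.insertNth_removeNth, zsmul_eq_mul] at h
  push_cast at h
  exact h.symm

lemma apply_cons_cons_swap {f : Raw L (k+2)} (hf : f ∈ AltML (k+2)) (a y : L) (t : Fin k → L) :
    f (Fin.cons a (Fin.cons y t)) = -f (Fin.cons y (Fin.cons a t)) := by
  have h := (alternatingMapOf hf).map_insertNth 1 a (Fin.cons y t)
  rw [show (1 : Fin (k+2)) = (0 : Fin (k+1)).succ from rfl, Fin.insertNth_succ_cons,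
    Fin.insertNth_zero'] at h
  simp only [alternatingMapOf_apply, Fin.val_succ, Fin.val_zero, zero_add, pow_one,
    neg_smul, one_smul] at h
  rw [h, neg_neg]
  rfl

lemma iota_d_apply {f : Raw L (k+1)} (hf : f ∈ AltML (k+1)) (y : L) (x : Fin (k+1) → L) :
    iota y (d (k+1) f) x = lieDeriv y f x + ∑ i : Fin (k+1), ∑ j : Fin (k+1),
      if (i : ℕ) + 1 ≤ j then (-1 : ℂ) ^ ((i : ℕ) + j) * f (dArgs i.succ j (Fin.cons y x))
      else 0 := by
  rw [iota, d_succ_apply, Fin.sum_univ_succ]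
  congr 1
  · rw [lieDeriv, ← Finset.sum_neg_distrib]
    refine Finset.sum_congr rfl fun j _ => ?_
    have hargs : dArgs 0 j (Fin.cons y x) = Fin.cons ⁅y, x j⁆ (x ∘ j.succAbove) := by
      simp [dArgs, Function.comp_def]
    have hsq : ((-1 : ℂ) ^ (j : ℕ)) * (-1) ^ (j : ℕ) = 1 := by rw [← mul_pow]; norm_num
    rw [Fin.val_zero, if_pos (Nat.zero_le _), hargs, apply_cons_eq_update hf]
    linear_combination (-f (update x j ⁅y, x j⁆)) * hsq
  · refine Finset.sum_congr rfl fun i _ => Finset.sum_congr rfl fun j _ => ?_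
    simp only [Fin.val_succ]
    refine if_congr Iff.rfl ?_ rfl
    ring_nf

lemma d_iota_apply {f : Raw L (k+1)} (hf : f ∈ AltML (k+1)) (y : L) (x : Fin (k+1) → L) :
    d k (iota y f) x = -∑ i : Fin (k+1), ∑ j : Fin (k+1),
      if (i : ℕ) + 1 ≤ j then (-1 : ℂ) ^ ((i : ℕ) + j) * f (dArgs i.succ j (Fin.cons y x))
      else 0 := by
  cases k with
  | zero => simp [d_zero]
  | succ m =>
    rw [d_succ_apply, ← Finset.sum_neg_distrib]
    refine Finset.sum_congr rfl fun i _ => ?_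
    conv_rhs => rw [Fin.sum_univ_succ]
    rw [Fin.val_zero, if_neg (by omega), zero_add, ← Finset.sum_neg_distrib]
    refine Finset.sum_congr rfl fun j _ => ?_
    by_cases hij : (i : ℕ) ≤ j
    · rw [if_pos hij, if_pos (by simpa using hij), iota, dArgs_succ_cons, apply_cons_cons_swap hf,
        Fin.val_succ, dArgs]
      ring
    · rw [if_neg hij, if_neg (by simpa using hij), neg_zero]

theorem d_iota_add_iota_d {f : Raw L (k+1)} (hf : f ∈ AltML (k+1)) (y : L) :
    d k (iota y f) + iota y (d (k+1) f) = lieDeriv y f := by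
  funext x
  rw [Pi.add_apply, d_iota_apply hf, iota_d_apply hf]
  ring

lemma mem_coboundaries_of_lieDeriv_eq_smul {f : Raw L (k+1)} (hf : f ∈ cocycles L (k+1))
    {y : L} {c : ℂ} (hc : c ≠ 0) (heig : lieDeriv y f = c • f) : f ∈ coboundaries L k := by
  refine ⟨c⁻¹ • iota y f, Submodule.smul_mem _ _ (iota_mem_AltML hf.1 y), ?_⟩
  have hcartan := d_iota_add_iota_d hf.1 y
  have hclosed : iota y (d (k+1) f) = 0 := by rw [LinearMap.mem_ker.mp hf.2]; rfl
  rw [hclosed, add_zero, heig] at hcartan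
  rw [map_smul, hcartan, smul_smul, inv_mul_cancel₀ hc, one_smul]

end Cartan

section Weight

open scoped Classical

variable {ι T : Type*}

def IsWeightBasis (g : T → L) (b : Module.Basis ι ℂ L) (wt : ι → T → ℂ) : Prop :=
  ∀ v i, ⁅g i, b v⁆ = wt v i • b v

variable {b : Module.Basis ι ℂ L} {k : ℕ}

lemma prod_repr_update (x : Fin k → L) (i : Fin k) (z : L) (v : Fin k → ι) :
    ∏ r, b.repr (update x i z r) (v r)
      = b.repr z (v i) * ∏ r ∈ Finset.univ.erase i, b.repr (x r) (v r) := by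
  have hupd : (fun r => b.repr (update x i z r) (v r))
      = update (fun r => b.repr (x r) (v r)) i (b.repr z (v i)) := by
    funext r
    rcases eq_or_ne r i with rfl | hr
    · simp
    · simp [hr]
  rw [hupd, Finset.prod_update_of_mem (Finset.mem_univ i), Finset.sdiff_singleton_eq_erase]

variable [Fintype ι] (b) (wt : ι → T → ℂ)

def weightProj (μ : T → ℂ) (k : ℕ) : Raw L k →ₗ[ℂ] Raw L k where
  toFun f x := ∑ v : Fin k → ι,
    if ∑ r, wt (v r) = μ then (∏ r, b.repr (x r) (v r)) * f (fun r => b (v r)) else 0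
  map_add' f f' := by
    funext x
    simp only [Pi.add_apply, ← Finset.sum_add_distrib]
    refine Finset.sum_congr rfl fun v _ => ?_
    split_ifs <;> ring
  map_smul' c f := by
    funext x
    simp only [Pi.smul_apply, smul_eq_mul, RingHom.id_apply, Finset.mul_sum]
    refine Finset.sum_congr rfl fun v _ => ?_
    split_ifs <;> ring

variable {b wt} {μ : T → ℂ}

lemma weightProj_apply (f : Raw L k) (x : Fin k → L) :
    weightProj b wt μ k f x = ∑ v : Fin k → ι,
      if ∑ r, wt (v r) = μ then (∏ r, b.repr (x r) (v r)) * f (fun r => b (v r)) else 0 :=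
  rfl

lemma weightProj_mem_ML (f : Raw L k) : weightProj b wt μ k f ∈ ML k := by
  apply mem_ML_of_update
  · intro x i a a'
    simp only [weightProj_apply, ← Finset.sum_add_distrib]
    refine Finset.sum_congr rfl fun v _ => ?_
    split_ifs
    · rw [prod_repr_update, prod_repr_update, prod_repr_update, map_add, Finsupp.add_apply]
      ring
    · rw [add_zero]
  · intro x i c a
    simp only [weightProj_apply, Finset.mul_sum]
    refine Finset.sum_congr rfl fun v _ => ?_
    split_ifs
    · rw [prod_repr_update, prod_repr_update, map_smul, Finsupp.smul_apply, smul_eq_mul]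
      ring
    · rw [mul_zero]

lemma weightProj_apply_basis (f : Raw L k) (w : Fin k → ι) :
    weightProj b wt μ k f (fun r => b (w r))
      = if ∑ r, wt (w r) = μ then f (fun r => b (w r)) else 0 := by
  rw [weightProj_apply, Fintype.sum_eq_single w]
  · simp
  · intro v hv
    obtain ⟨r, hr⟩ := Function.ne_iff.mp hv
    have hzero : b.repr (b (w r)) (v r) = 0 := by
      rw [Module.Basis.repr_self, Finsupp.single_eq_of_ne hr]
    rw [Finset.prod_eq_zero (f := fun r => b.repr (b (w r)) (v r)) (Finset.mem_univ r) hzero,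
      zero_mul, ite_self]

lemma weightProj_mem_AltML {f : Raw L k} (hf : f ∈ AltML k) :
    weightProj b wt μ k f ∈ AltML k := by
  refine mem_AltML_iff.mpr ⟨weightProj_mem_ML f, fun x i j hij hx => ?_⟩
  set σ := Equiv.swap i j
  have hxσ : ∀ r, x (σ r) = x r := by
    intro r
    rcases eq_or_ne r i with rfl | hri
    · rw [Equiv.swap_apply_left, hx]
    rcases eq_or_ne r j with rfl | hrj
    · rw [Equiv.swap_apply_right, hx]
    rw [Equiv.swap_apply_of_ne_of_ne hri hrj]
  -- Precomposing the summation index with the transposition `σ` negates every term.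
  have hterm : ∀ v : Fin k → ι,
      (if ∑ r, wt (v r) = μ then (∏ r, b.repr (x r) (v r)) * f (fun r => b (v r)) else 0)
        = -(if ∑ r, wt (v (σ r)) = μ then
              (∏ r, b.repr (x r) (v (σ r))) * f (fun r => b (v (σ r))) else 0) := by
    intro v
    have hw : ∑ r, wt (v (σ r)) = ∑ r, wt (v r) := Equiv.sum_comp σ fun r => wt (v r)
    have hp : ∏ r, b.repr (x r) (v (σ r)) = ∏ r, b.repr (x r) (v r) :=
      calc ∏ r, b.repr (x r) (v (σ r))
            = ∏ r, b.repr (x (σ r)) (v (σ r)) := by simp only [hxσ]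
        _ = ∏ r, b.repr (x r) (v r) := Equiv.prod_comp σ fun r => b.repr (x r) (v r)
    have hswap : f (fun r => b (v (σ r))) = -f (fun r => b (v r)) :=
      (alternatingMapOf hf).map_swap (fun r => b (v r)) hij
    rw [hw, hp, hswap]
    split_ifs <;> ring
  have hneg : weightProj b wt μ k f x = -weightProj b wt μ k f x := by
    rw [weightProj_apply, ← Finset.sum_neg_distrib]
    have hσ : Involutive fun v : Fin k → ι => v ∘ σ := fun v => by
      funext r
      simp [σ, Equiv.swap_apply_self]
    exact Fintype.sum_bijective _ hσ.bijective _ _ hterm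
  exact self_eq_neg.mp hneg

lemma sum_weightProj {f : Raw L k} (hf : f ∈ ML k) {S : Finset (T → ℂ)}
    (hS : ∀ w : Fin k → ι, ∑ r, wt (w r) ∈ S) :
    ∑ μ ∈ S, weightProj b wt μ k f = f := by
  refine ML.ext_basis b (sum_mem fun μ _ => weightProj_mem_ML f) hf fun w => ?_
  simp only [Finset.sum_apply, weightProj_apply_basis, Finset.sum_ite_eq, hS w, if_true]

variable {g : T → L}

lemma repr_lie (hwt : IsWeightBasis g b wt) (i : T) (y : L) (w : ι) :
    b.repr ⁅g i, y⁆ w = wt w i * b.repr y w := by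
  have hexp : ⁅g i, y⁆ = ∑ u, (b.repr y u * wt u i) • b u := by
    conv_lhs => rw [← b.sum_repr y]
    rw [lie_sum]
    exact Finset.sum_congr rfl fun u _ => by rw [lie_smul, hwt u i, smul_smul]
  rw [hexp, b.repr_sum_self, mul_comm]

lemma wt_eq_of_repr_ne_zero (hwt : IsWeightBasis g b wt) {lam : T → ℂ} {y : L}
    (hy : ∀ i, ⁅g i, y⁆ = lam i • y) {w : ι} (hw : b.repr y w ≠ 0) : wt w = lam := by
  funext i
  have h := repr_lie hwt i y w
  rw [hy i, map_smul, Finsupp.smul_apply, smul_eq_mul] at h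
  exact mul_right_cancel₀ hw h.symm

lemma wt_eq_add_of_repr_lie_ne_zero (hwt : IsWeightBasis g b wt) {a c e : ι}
    (h : b.repr ⁅b a, b c⁆ e ≠ 0) : wt e = wt a + wt c :=
  wt_eq_of_repr_ne_zero hwt (fun i => by
    rw [leibniz_lie, hwt a i, hwt c i, smul_lie, lie_smul, Pi.add_apply, add_smul]) h

lemma lieDeriv_weightProj (hwt : IsWeightBasis g b wt) (f : Raw L k) (i : T) :
    lieDeriv (g i) (weightProj b wt μ k f) = (-μ i) • weightProj b wt μ k f := by
  funext x
  simp only [lieDeriv, Pi.smul_apply, smul_eq_mul, weightProj_apply, neg_mul, neg_inj]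
  rw [Finset.sum_comm, Finset.mul_sum]
  refine Finset.sum_congr rfl fun v _ => ?_
  split_ifs with hv
  · have hr : ∀ r, ∏ s, b.repr (update x r ⁅g i, x r⁆ s) (v s)
        = wt (v r) i * ∏ s, b.repr (x s) (v s) := fun r => by
      rw [prod_repr_update, repr_lie hwt, mul_assoc,
        Finset.mul_prod_erase _ (fun s => b.repr (x s) (v s)) (Finset.mem_univ r)]
    simp only [hr, mul_assoc, ← Finset.sum_mul]
    rw [← Finset.sum_apply, hv]
  · simp

lemma sum_wt_cons_eq_sum_wt (hwt : IsWeightBasis g b wt) {m : ℕ} {i : Fin (m+2)}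
    {j : Fin (m+1)} (hij : (i : ℕ) ≤ j) (w : Fin (m+2) → ι) {e : ι}
    (he : b.repr ⁅b (w i), b (w j.succ)⁆ e ≠ 0) :
    ∑ r, wt ((Fin.cons e (w ∘ i.succAbove ∘ j.succAbove) : Fin (m+1) → ι) r)
      = ∑ r, wt (w r) := by
  rw [Fin.sum_univ_succ, Fin.sum_univ_succAbove (fun r => wt (w r)) i,
    Fin.sum_univ_succAbove (fun u => wt (w (i.succAbove u))) j, succAbove_eq_succ_of_le hij]
  simp only [Fin.cons_succ, Fin.cons_zero, comp_apply, wt_eq_add_of_repr_lie_ne_zero hwt he]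
  abel

lemma weightProj_apply_dArgs_basis (hwt : IsWeightBasis g b wt) {m : ℕ}
    {f : Raw L (m+1)} (hf : f ∈ ML (m+1)) {i : Fin (m+2)} {j : Fin (m+1)} (hij : (i : ℕ) ≤ j)
    (w : Fin (m+2) → ι) :
    weightProj b wt μ (m+1) f (dArgs i j fun r => b (w r))
      = if ∑ r, wt (w r) = μ then f (dArgs i j fun r => b (w r)) else 0 := by
  set c := b.repr ⁅b (w i), b (w j.succ)⁆
  set w' : ι → Fin (m+1) → ι := fun e => Fin.cons e (w ∘ i.succAbove ∘ j.succAbove)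
  have hexpand : ∀ h ∈ ML (m+1),
      h (dArgs i j fun r => b (w r)) = ∑ e, c e * h (fun r => b (w' e r)) := fun h hh => by
    rw [dArgs, ML.apply_cons_eq_sum b hh]
    refine Finset.sum_congr rfl fun e _ => congrArg _ (congrArg h (funext fun r => ?_))
    cases r using Fin.cases <;> rfl
  have hterm : ∀ e, c e * weightProj b wt μ (m+1) f (fun r => b (w' e r))
      = if ∑ r, wt (w r) = μ then c e * f (fun r => b (w' e r)) else 0 := fun e => by
    rcases eq_or_ne (c e) 0 with he | he
    · simp [he]
    · rw [weightProj_apply_basis, sum_wt_cons_eq_sum_wt hwt hij w he, mul_ite, mul_zero]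
  rw [hexpand _ (weightProj_mem_ML f), hexpand f hf, Finset.sum_congr rfl fun e _ => hterm e,
    Finset.sum_ite_irrel, Finset.sum_const_zero]

lemma d_weightProj (hwt : IsWeightBasis g b wt) {f : Raw L k} (hf : f ∈ ML k) :
    d k (weightProj b wt μ k f) = weightProj b wt μ (k+1) (d k f) := by
  cases k with
  | zero => rw [d_zero, d_zero, map_zero]
  | succ m =>
    refine ML.ext_basis b (d_mem_ML (weightProj_mem_ML f)) (weightProj_mem_ML _) fun w => ?_
    rw [weightProj_apply_basis, d_succ_apply, d_succ_apply]
    by_cases hw : ∑ r, wt (w r) = μ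
    · rw [if_pos hw]
      refine Finset.sum_congr rfl fun i _ => Finset.sum_congr rfl fun j _ => ?_
      refine if_ctx_congr Iff.rfl (fun hij => ?_) fun _ => rfl
      rw [weightProj_apply_dArgs_basis hwt hf hij, if_pos hw]
    · rw [if_neg hw]
      refine Finset.sum_eq_zero fun i _ => Finset.sum_eq_zero fun j _ => ?_
      split_ifs with hij
      · rw [weightProj_apply_dArgs_basis hwt hf hij, if_neg hw, mul_zero]
      · rfl

lemma weightProj_mem_cocycles (hwt : IsWeightBasis g b wt) {f : Raw L k}
    (hf : f ∈ cocycles L k) : weightProj b wt μ k f ∈ cocycles L k :=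
  Submodule.mem_inf.mpr ⟨weightProj_mem_AltML hf.1, LinearMap.mem_ker.mpr <| by
    rw [d_weightProj hwt (AltML_le_ML hf.1), LinearMap.mem_ker.mp hf.2, map_zero]⟩

lemma weightProj_mem_coboundaries_of_ne_zero (hwt : IsWeightBasis g b wt)
    {f : Raw L (k+1)} (hf : f ∈ cocycles L (k+1)) (hμ : μ ≠ 0) :
    weightProj b wt μ (k+1) f ∈ coboundaries L k := by
  obtain ⟨i, hi⟩ := Function.ne_iff.mp hμ
  exact mem_coboundaries_of_lieDeriv_eq_smul (weightProj_mem_cocycles hwt hf)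
    (neg_ne_zero.mpr hi) (lieDeriv_weightProj hwt f i)

lemma sub_weightProj_zero_mem_coboundaries (hwt : IsWeightBasis g b wt)
    {f : Raw L (k+1)} (hf : f ∈ cocycles L (k+1)) :
    f - weightProj b wt 0 (k+1) f ∈ coboundaries L k := by
  set S := insert 0 (Finset.univ.image fun w : Fin (k+1) → ι => ∑ r, wt (w r))
  have hdecomp : ∑ μ ∈ S, weightProj b wt μ (k+1) f = f := sum_weightProj (AltML_le_ML hf.1)
    fun w => Finset.mem_insert_of_mem (Finset.mem_image_of_mem _ (Finset.mem_univ w))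
  rw [← Finset.add_sum_erase S _ (Finset.mem_insert_self 0 _)] at hdecomp
  rw [(eq_sub_of_add_eq' hdecomp).symm]
  exact sum_mem fun μ hμ =>
    weightProj_mem_coboundaries_of_ne_zero hwt hf (Finset.ne_of_mem_erase hμ)

end Weight

section WeightZero

variable {ι : Type*} [Fintype ι] {b : Module.Basis ι ℂ L} {t : ℕ} {g : Fin t → L}
  {wt : ι → Fin t → ℂ} {k : ℕ}

lemma mem_weightZero_zero (f : Raw L 0) : f ∈ weightZero g 0 :=
  fun _ _ _ hlam => absurd (Finset.sum_of_isEmpty _) hlam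

lemma weightProj_zero_mem_weightZero (hwt : IsWeightBasis g b wt) (f : Raw L k) :
    weightProj b wt 0 k f ∈ weightZero g k := by
  intro lam x hx hlam
  refine Finset.sum_eq_zero fun v _ => ?_
  split_ifs with hv
  · obtain ⟨r, hr⟩ : ∃ r, b.repr (x r) (v r) = 0 := by
      by_contra! hall
      refine hlam (hv ▸ Finset.sum_congr rfl fun r _ => ?_)
      exact (wt_eq_of_repr_ne_zero hwt (hx r) (hall r)).symm
    rw [Finset.prod_eq_zero (Finset.mem_univ r) hr, zero_mul]
  · rfl

lemma weightProj_zero_eq_self (hwt : IsWeightBasis g b wt) {f : Raw L k}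
    (hf : f ∈ ML k) (hf0 : f ∈ weightZero g k) : weightProj b wt 0 k f = f := by
  refine ML.ext_basis b (weightProj_mem_ML f) hf fun w => ?_
  rw [weightProj_apply_basis]
  split_ifs with hw
  · rfl
  · exact (hf0 (fun r => wt (w r)) _ (fun r i => hwt (w r) i) hw).symm

lemma mem_map_weightZero_of_mem_coboundaries (hwt : IsWeightBasis g b wt)
    {h : Raw L (k+1)} (hh : h ∈ weightZero g (k+1)) (hcb : h ∈ coboundaries L k) :
    h ∈ (AltML k ⊓ weightZero g k).map (d k) := by
  obtain ⟨u, hu, rfl⟩ := hcb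
  refine ⟨weightProj b wt 0 k u,
    ⟨weightProj_mem_AltML hu, weightProj_zero_mem_weightZero hwt u⟩, ?_⟩
  rw [d_weightProj hwt (AltML_le_ML hu)]
  exact weightProj_zero_eq_self hwt (d_mem_ML (AltML_le_ML hu)) hh

end WeightZero

end CE

open CE in
theorem weight_zero_subcomplex_quasi_iso_general (L : Type*) [LieRing L] [LieAlgebra ℂ L]
    (t : ℕ) (g : Fin t → L)
    (hbasis : ∃ b : Module.Basis (Fin (Module.finrank ℂ L)) ℂ L,
      ∀ v i, ∃ c : ℂ, ⁅g i, b v⁆ = c • b v) :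
    (∀ f ∈ cocycles L 0, f ∈ weightZero g 0) ∧
      (∀ k, ∀ f ∈ cocycles L (k+1), ∃ h ∈ cocycles L (k+1) ⊓ weightZero g (k+1),
        f - h ∈ coboundaries L k) ∧
      (∀ k, ∀ h ∈ cocycles L (k+1) ⊓ weightZero g (k+1), h ∈ coboundaries L k →
        h ∈ (AltML k ⊓ weightZero g k).map (d k)) := by
  obtain ⟨b, hb⟩ := hbasis
  choose wt hwt using hb
  refine ⟨fun f _ => mem_weightZero_zero f, fun k f hf => ?_,
    fun k h hh hcb => mem_map_weightZero_of_mem_coboundaries hwt hh.2 hcb⟩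
  exact ⟨weightProj b wt 0 (k+1) f,
    ⟨weightProj_mem_cocycles hwt hf, weightProj_zero_mem_weightZero hwt f⟩,
    sub_weightProj_zero_mem_coboundaries hwt hf⟩

open CE in
/-- Fuchs' lemma: if `g₁, …, g_t` are pairwise commuting elements of a finite-dimensional
complex Lie algebra `𝔤` admitting a basis of simultaneous eigenvectors of all `ad gᵢ`,
then the inclusion of the weight-zero subcomplex into the full Chevalley–Eilenberg
complex induces an isomorphism on cohomology with trivial coefficients:
every cocycle is cohomologous to a weight-zero cocycle, and a weight-zero cocycle that
is a coboundary is the coboundary of a weight-zero cochain. -/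
theorem weight_zero_subcomplex_quasi_iso (L : Type*) [LieRing L] [LieAlgebra ℂ L]
    [FiniteDimensional ℂ L] (t : ℕ) (g : Fin t → L)
    (hcomm : ∀ i j, ⁅g i, g j⁆ = 0)
    (hbasis : ∃ b : Module.Basis (Fin (Module.finrank ℂ L)) ℂ L,
      ∀ v i, ∃ c : ℂ, ⁅g i, b v⁆ = c • b v) :
    (∀ f ∈ cocycles L 0, f ∈ weightZero g 0) ∧
      (∀ k, ∀ f ∈ cocycles L (k+1), ∃ h ∈ cocycles L (k+1) ⊓ weightZero g (k+1),
        f - h ∈ coboundaries L k) ∧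
      (∀ k, ∀ h ∈ cocycles L (k+1) ⊓ weightZero g (k+1), h ∈ coboundaries L k →
        h ∈ (AltML k ⊓ weightZero g k).map (d k)) :=
  weight_zero_subcomplex_quasi_iso_general L t g hbasis
end
end
end
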